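/- Let K be a field, let q, z, y ∈ K with z and y nonzero, and assume 1 − q^{4j} ≠ 0 for all 1 ≤ j ≤ N. Then Σ_μ z^{O(μ)} y^{O(μ')} q^{|μ|}, the finite sum over all strict partitions μ whose parts are all ≤ 2N+1, equals Σ_{j=0}^{N} [N choose j]_{q⁴} · (−zyq; q⁴)_{j+1} · (−zy^{−1}q; q⁴)_{N−j} · (yq)^{2N−2j}. -/

import Mathlib

/-!
Prepending a largest part `M + 1` to a strict partition with parts `≤ M` adds one to each of the
first `M + 1` parts of the conjugate, flipping their parity, so `O(μ')` becomes `M + 1 - O(μ')`.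
Hence the generating function `G_M(y)` of strict partitions with parts `≤ M` satisfies
`G_{M+1}(y) = G_M(y) + z^[M+1 odd] (qy)^(M+1) G_M(1/y)`, and two steps express
`G_{2N+3}(y)` through `G_{2N+1}(y)` and `G_{2N+1}(1/y)`. The closed form obeys the same
recurrence: for any sequence `b`, the sum `∑_{i+k=N} [i+k choose i]_Q (x;Q)_{i+1} b_k` satisfies a
first-order recurrence in `N`, obtained from the `q`-Pascal rule and a telescoping sum built on
the absorption identity `[i+k+1 choose i+1]_Q (1 - Q^(i+1)) = [i+k+1 choose i]_Q (1 - Q^(k+1))`.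
-/

open scoped BigOperators

/-- A partition: a weakly decreasing sequence of nonnegative integers (0-indexed:
`parts i` is λ_{i+1}) with finitely many nonzero terms. -/
structure IntPartition where
  parts : ℕ → ℕ
  antitone : Antitone parts
  fin_support : ∃ N, ∀ n, N ≤ n → parts n = 0

namespace IntPartition

/-- Σ_{i≥1} ⌈λ_{2i-1}/2⌉ (odd-indexed rows, 1-based; ceiling). -/
noncomputable def statA (l : IntPartition) : ℕ := ∑ᶠ i : ℕ, (l.parts (2 * i) + 1) / 2
/-- Σ_{i≥1} ⌊λ_{2i-1}/2⌋. -/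
noncomputable def statB (l : IntPartition) : ℕ := ∑ᶠ i : ℕ, l.parts (2 * i) / 2
/-- Σ_{i≥1} ⌈λ_{2i}/2⌉. -/
noncomputable def statC (l : IntPartition) : ℕ := ∑ᶠ i : ℕ, (l.parts (2 * i + 1) + 1) / 2
/-- Σ_{i≥1} ⌊λ_{2i}/2⌋. -/
noncomputable def statD (l : IntPartition) : ℕ := ∑ᶠ i : ℕ, l.parts (2 * i + 1) / 2

/-- ℓ(λ): the number of nonzero parts. -/
noncomputable def length (l : IntPartition) : ℕ := Set.ncard (Function.support l.parts)

/-- |λ|: the sum of all parts. -/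
noncomputable def size (l : IntPartition) : ℕ := ∑ᶠ i : ℕ, l.parts i

/-- A partition is strict if its nonzero parts are pairwise distinct. -/
def Strict (l : IntPartition) : Prop := ∀ i, l.parts (i + 1) ≠ 0 → l.parts (i + 1) < l.parts i

/-- The Andrews–Stanley four-parameter weight ω(λ). -/
noncomputable def weight {R : Type*} [CommRing R] (a b c d : R) (l : IntPartition) : R :=
  a ^ l.statA * b ^ l.statB * c ^ l.statC * d ^ l.statD

/-- O(λ): the number of odd parts. -/
noncomputable def oddParts (l : IntPartition) : ℕ := Set.ncard {i : ℕ | Odd (l.parts i)}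

/-- O(λ'): the number of odd parts of the conjugate partition. -/
noncomputable def conjOddParts (l : IntPartition) : ℕ :=
  Set.ncard {j : ℕ | Odd (Set.ncard {i : ℕ | j + 1 ≤ l.parts i})}

end IntPartition

/-- The q-shifted factorial (x;q)_n. -/
def poch {R : Type*} [CommRing R] (x q : R) (n : ℕ) : R :=
  ∏ k ∈ Finset.range n, (1 - x * q ^ k)

/-- The infinite q-shifted factorial (x;q)_∞ (as an infinite product of reals). -/
noncomputable def pochInf (x q : ℝ) : ℝ := ∏' k : ℕ, (1 - x * q ^ k)

/-- The basic hypergeometric series ₂φ₁(α,β;γ;q,w). -/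
noncomputable def phi21 (α β γ q w : ℝ) : ℝ :=
  ∑' n : ℕ, poch α q n * poch β q n / (poch q q n * poch γ q n) * w ^ n

/-- Absolute convergence of the ₂φ₁ series. -/
def phi21Summable (α β γ q w : ℝ) : Prop :=
  Summable (fun n : ℕ => poch α q n * poch β q n / (poch q q n * poch γ q n) * w ^ n)

/-- The Gaussian binomial coefficient [N choose k]_q. -/
noncomputable def gauss {K : Type*} [Field K] (q : K) (N k : ℕ) : K :=
  poch q q N / (poch q q k * poch q q (N - k))

/-- Ψ_N(a,b,c,d;z): the generating function of strict partitions with parts ≤ N. -/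
noncomputable def Psi {R : Type*} [CommRing R] (a b c d z : R) (N : ℕ) : R :=
  ∑ᶠ μ : {μ : IntPartition // μ.Strict ∧ μ.parts 0 ≤ N},
    IntPartition.weight a b c d μ.1 * z ^ μ.1.length

open Finset

lemma Set.ncard_setOf_nat_eq {p : ℕ → Prop} [DecidablePred p] (hp : {i | p (i + 1)}.Finite) :
    {i | p i}.ncard = {i | p (i + 1)}.ncard + if p 0 then 1 else 0 := by
  have hinj : Function.Injective (· + 1) := add_left_injective 1
  by_cases h0 : p 0
  · have hset : {i | p i} = insert 0 ((· + 1) '' {i | p (i + 1)}) := by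
      ext (_ | i) <;> simp [h0]
    rw [hset, Set.ncard_insert_of_notMem (by simp) (hp.image _),
      Set.ncard_image_of_injective _ hinj, if_pos h0]
  · have hset : {i | p i} = (· + 1) '' {i | p (i + 1)} := by
      ext (_ | i) <;> simp [h0]
    rw [hset, Set.ncard_image_of_injective _ hinj, if_neg h0, add_zero]

lemma finsum_nat_eq_add_finsum_succ {M : Type*} [AddCommMonoid M] {f : ℕ → M}
    (hf : (Function.support f).Finite) : ∑ᶠ i, f i = f 0 + ∑ᶠ i, f (i + 1) := by
  obtain ⟨B, hB⟩ := hf.bddAbove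
  have hsub : ∀ n, B < n → f n = 0 := fun n hn => Function.notMem_support.mp fun h => by
    have := hB h; omega
  rw [finsum_eq_sum_of_support_subset (s := Finset.range (B + 1)) f ?_,
    finsum_eq_sum_of_support_subset (s := Finset.range B) _ ?_, Finset.sum_range_succ', add_comm]
  · intro n hn
    simp only [Finset.coe_range, Set.mem_Iio]
    by_contra! h
    exact hn (hsub (n + 1) (by omega))
  · intro n hn
    simp only [Finset.coe_range, Set.mem_Iio]
    by_contra! h
    exact hn (hsub n (by omega))

namespace IntPartition

variable (μ : IntPartition)

lemma ext_parts {μ ν : IntPartition} (h : μ.parts = ν.parts) : μ = ν := by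
  cases μ; cases ν; simpa using h

lemma parts_le_parts_zero (i : ℕ) : μ.parts i ≤ μ.parts 0 := μ.antitone (Nat.zero_le i)

lemma finite_support_parts : (Function.support μ.parts).Finite := by
  obtain ⟨N, hN⟩ := μ.fin_support
  exact (Set.finite_lt_nat N).subset fun n hn => lt_of_not_ge fun h => hn (hN n h)

lemma finite_setOf_parts {p : ℕ → Prop} (hp : ¬ p 0) : {i | p (μ.parts i)}.Finite :=
  μ.finite_support_parts.subset fun _ hi h => hp (h ▸ hi)

/-- The part `μ'_{j+1}` of the conjugate partition (0-indexed, like `parts`). -/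
noncomputable def conjPart (j : ℕ) : ℕ := {i | j + 1 ≤ μ.parts i}.ncard

lemma conjPart_eq_zero {j : ℕ} (h : μ.parts 0 ≤ j) : μ.conjPart j = 0 := by
  rw [conjPart, Set.ncard_eq_zero (μ.finite_setOf_parts (by simp))]
  ext i
  simp only [Set.mem_ofPred_eq, Set.mem_empty_iff_false, iff_false, not_le]
  exact (μ.parts_le_parts_zero i).trans_lt (by omega)

lemma conjOddParts_eq : μ.conjOddParts = {j | Odd (μ.conjPart j)}.ncard := rfl

lemma setOf_odd_conjPart_subset : {j | Odd (μ.conjPart j)} ⊆ Set.Iio (μ.parts 0) := by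
  intro j hj
  by_contra h
  simp [conjPart_eq_zero μ (not_lt.mp h)] at hj

def nil : IntPartition where
  parts := fun _ => 0
  antitone := fun _ _ _ => le_rfl
  fin_support := ⟨0, fun _ _ => rfl⟩

/-- Prepend the part `a`; only meaningful when `μ.parts 0 ≤ a`. -/
def cons (a : ℕ) : IntPartition where
  parts
    | 0 => max a (μ.parts 0)
    | n + 1 => μ.parts n
  antitone := antitone_nat_of_succ_le fun
    | 0 => le_max_right _ _
    | n + 1 => μ.antitone n.le_succ
  fin_support := by
    obtain ⟨N, hN⟩ := μ.fin_support
    exact ⟨N + 1, fun | 0, _ => by omega | n + 1, h => hN n (by omega)⟩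

variable {μ} {a : ℕ}

@[simp] lemma cons_parts_succ (n : ℕ) : (μ.cons a).parts (n + 1) = μ.parts n := rfl

lemma cons_parts_zero (ha : μ.parts 0 ≤ a) : (μ.cons a).parts 0 = a := max_eq_left ha

lemma size_cons (ha : μ.parts 0 ≤ a) : (μ.cons a).size = a + μ.size := by
  rw [size, finsum_nat_eq_add_finsum_succ (μ.cons a).finite_support_parts, cons_parts_zero ha]
  rfl

lemma ncard_setOf_cons_parts {p : ℕ → Prop} [DecidablePred p] (hp : ¬ p 0)
    (ha : μ.parts 0 ≤ a) :
    {i | p ((μ.cons a).parts i)}.ncard = {i | p (μ.parts i)}.ncard + if p a then 1 else 0 := by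
  rw [Set.ncard_setOf_nat_eq (μ.finite_setOf_parts hp), cons_parts_zero ha]
  rfl

lemma oddParts_cons (ha : μ.parts 0 ≤ a) :
    (μ.cons a).oddParts = μ.oddParts + if Odd a then 1 else 0 :=
  ncard_setOf_cons_parts (p := Odd) (by simp) ha

lemma conjPart_cons (ha : μ.parts 0 ≤ a) (j : ℕ) :
    (μ.cons a).conjPart j = if j < a then μ.conjPart j + 1 else 0 := by
  rw [conjPart, ncard_setOf_cons_parts (p := (j + 1 ≤ ·)) (by simp) ha]
  split_ifs with hja haj haj
  · rfl
  · omega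
  · omega
  · exact μ.conjPart_eq_zero (by omega)

lemma conjOddParts_cons (ha : μ.parts 0 ≤ a) :
    (μ.cons a).conjOddParts = a - μ.conjOddParts := by
  have hsub := μ.setOf_odd_conjPart_subset.trans (Set.Iio_subset_Iio ha)
  have hset : {j | Odd ((μ.cons a).conjPart j)} = Set.Iio a \ {j | Odd (μ.conjPart j)} := by
    ext j
    simp only [conjPart_cons ha, Set.mem_ofPred_eq, Set.mem_sdiff, Set.mem_Iio]
    split_ifs with h
    · simp [Nat.odd_add_one, h]
    · simp [h]
  rw [conjOddParts_eq, conjOddParts_eq, hset, Set.ncard_sdiff hsub ((Set.finite_Iio a).subset hsub),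
    Set.ncard_Iio_nat]

lemma conjOddParts_le (ha : μ.parts 0 ≤ a) : μ.conjOddParts ≤ a :=
  (Set.ncard_le_ncard (μ.setOf_odd_conjPart_subset.trans (Set.Iio_subset_Iio ha))
    (Set.finite_Iio a)).trans_eq (Set.ncard_Iio_nat a)

lemma nil_size : nil.size = 0 := finsum_zero

lemma nil_oddParts : nil.oddParts = 0 := by simp [oddParts, nil]

lemma nil_conjOddParts : nil.conjOddParts = 0 := by simp [conjOddParts, nil]

def tail (μ : IntPartition) : IntPartition where
  parts n := μ.parts (n + 1)
  antitone _ _ h := μ.antitone (Nat.succ_le_succ h)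
  fin_support := by
    obtain ⟨N, hN⟩ := μ.fin_support
    exact ⟨N, fun n hn => hN (n + 1) (by omega)⟩

lemma cons_tail (μ : IntPartition) : μ.tail.cons (μ.parts 0) = μ :=
  ext_parts <| funext fun
    | 0 => max_eq_left (μ.antitone (Nat.zero_le 1))
    | _ + 1 => rfl

lemma Strict.tail {μ : IntPartition} (hμ : μ.Strict) : μ.tail.Strict := fun i => hμ (i + 1)

lemma Strict.cons {μ : IntPartition} {a : ℕ} (hμ : μ.Strict) (ha : μ.parts 0 < a) :
    (μ.cons a).Strict
  | 0, _ => by rw [cons_parts_zero ha.le]; exact ha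
  | i + 1, h => hμ i h

def strictBounded (M : ℕ) : Set IntPartition := {μ | μ.Strict ∧ μ.parts 0 ≤ M}

lemma strictBounded_zero : strictBounded 0 = {nil} := by
  ext μ
  refine ⟨fun ⟨_, h0⟩ => ext_parts (funext fun i => ?_),
    fun h => h ▸ ⟨fun _ h => absurd rfl h, le_rfl⟩⟩
  have := μ.parts_le_parts_zero i
  simp only [nil]
  omega

lemma strictBounded_succ (M : ℕ) :
    strictBounded (M + 1) = strictBounded M ∪ (cons · (M + 1)) '' strictBounded M := by
  ext μ
  constructor
  · rintro ⟨hμ, h0⟩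
    rcases Nat.lt_or_ge M (μ.parts 0) with hM | hM
    · refine Or.inr ⟨μ.tail, ⟨hμ.tail, ?_⟩, ?_⟩
      · change μ.parts 1 ≤ M
        by_cases h1 : μ.parts 1 = 0
        · omega
        · have : μ.parts 1 < μ.parts 0 := hμ 0 h1
          omega
      · rw [show M + 1 = μ.parts 0 by omega]
        exact μ.cons_tail
    · exact Or.inl ⟨hμ, hM⟩
  · rintro (⟨hμ, h0⟩ | ⟨ν, ⟨hν, h0⟩, rfl⟩)
    · exact ⟨hμ, h0.trans M.le_succ⟩
    · exact ⟨hν.cons (by omega), (cons_parts_zero (by omega)).le⟩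

lemma disjoint_strictBounded_image_cons (M : ℕ) :
    Disjoint (strictBounded M) ((cons · (M + 1)) '' strictBounded M) := by
  rw [Set.disjoint_left]
  rintro _ ⟨-, h0⟩ ⟨ν, ⟨-, hν⟩, rfl⟩
  rw [cons_parts_zero (by omega)] at h0
  omega

lemma injective_cons (a : ℕ) : Function.Injective (cons · a) := fun _ _ h =>
  ext_parts <| funext fun n => congrArg (fun ρ => ρ.parts (n + 1)) h

lemma finite_strictBounded (M : ℕ) : (strictBounded M).Finite := by
  induction M with
  | zero => simp [strictBounded_zero]
  | succ M ih => rw [strictBounded_succ]; exact ih.union (ih.image _)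

end IntPartition

section GeneratingFunction

open IntPartition

variable {K : Type*} [Field K]

noncomputable def oddGF (z y q : K) (M : ℕ) : K :=
  ∑ᶠ μ ∈ strictBounded M, z ^ μ.oddParts * y ^ μ.conjOddParts * q ^ μ.size

lemma oddGF_zero (z y q : K) : oddGF z y q 0 = 1 := by
  simp [oddGF, strictBounded_zero, nil_size, nil_oddParts, nil_conjOddParts]

lemma oddGF_term_cons {z y q : K} (hy : y ≠ 0) {M : ℕ} {μ : IntPartition}
    (hμ : μ.parts 0 ≤ M + 1) :
    z ^ (μ.cons (M + 1)).oddParts * y ^ (μ.cons (M + 1)).conjOddParts *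
        q ^ (μ.cons (M + 1)).size =
      (if Odd (M + 1) then z else 1) * (q * y) ^ (M + 1) *
        (z ^ μ.oddParts * y⁻¹ ^ μ.conjOddParts * q ^ μ.size) := by
  rw [oddParts_cons hμ, conjOddParts_cons hμ, size_cons hμ,
    pow_sub₀ y hy (conjOddParts_le hμ), inv_pow]
  split_ifs <;> ring

lemma oddGF_succ (z q : K) {y : K} (hy : y ≠ 0) (M : ℕ) :
    oddGF z y q (M + 1) =
      oddGF z y q M + (if Odd (M + 1) then z else 1) * (q * y) ^ (M + 1) * oddGF z y⁻¹ q M := by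
  rw [oddGF, strictBounded_succ,
    finsum_mem_union (disjoint_strictBounded_image_cons M) (finite_strictBounded M)
      ((finite_strictBounded M).image _),
    finsum_mem_image (injective_cons _).injOn, oddGF, oddGF, mul_finsum_mem]
  congr 1
  exact finsum_mem_congr rfl fun μ hμ => oddGF_term_cons hy (by have := hμ.2; omega)

lemma oddGF_two_mul_add_three (z q : K) {y : K} (hy : y ≠ 0) (N : ℕ) :
    oddGF z y q (2 * N + 3) =
      (1 + z * y * q ^ (4 * N + 5)) * oddGF z y q (2 * N + 1) +
        (q * y) ^ (2 * N + 2) * (1 + z * y * q) * oddGF z y⁻¹ q (2 * N + 1) := by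
  have hodd : Odd (2 * N + 2 + 1) := ⟨N + 1, by ring⟩
  have heven : ¬ Odd (2 * N + 1 + 1) := by rw [Nat.odd_iff]; omega
  rw [show 2 * N + 3 = 2 * N + 1 + 1 + 1 from rfl, oddGF_succ z q hy (2 * N + 1 + 1),
    oddGF_succ z q hy (2 * N + 1), oddGF_succ z q (inv_ne_zero hy) (2 * N + 1), inv_inv,
    if_pos hodd, if_neg heven, mul_pow q y⁻¹, inv_pow]
  field_simp
  ring

end GeneratingFunction

section QBinomial

variable {K : Type*} [Field K]

lemma poch_zero (x Q : K) : poch x Q 0 = 1 := rfl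

lemma poch_succ (x Q : K) (n : ℕ) : poch x Q (n + 1) = poch x Q n * (1 - x * Q ^ n) :=
  prod_range_succ _ _

lemma poch_ne_zero_of_le {x Q : K} {m n : ℕ} (hm : poch x Q m ≠ 0) (hn : n ≤ m) :
    poch x Q n ≠ 0 :=
  prod_ne_zero_iff.mpr fun k hk =>
    prod_ne_zero_iff.mp hm k (range_subset_range.mpr hn hk)

/-- The Gaussian binomial `[i + k choose i]_Q`, indexed symmetrically. -/
noncomputable def qbinom (Q : K) (i k : ℕ) : K :=
  poch Q Q (i + k) / (poch Q Q i * poch Q Q k)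

variable {Q : K}

lemma qbinom_comm (i k : ℕ) : qbinom Q i k = qbinom Q k i := by
  rw [qbinom, qbinom, add_comm, mul_comm]

lemma qbinom_zero_left {k : ℕ} (hk : poch Q Q k ≠ 0) : qbinom Q 0 k = 1 := by
  rw [qbinom, zero_add, poch_zero, one_mul, div_self hk]

lemma qbinom_zero_right {i : ℕ} (hi : poch Q Q i ≠ 0) : qbinom Q i 0 = 1 := by
  rw [qbinom_comm, qbinom_zero_left hi]

lemma qbinom_succ_succ {i k : ℕ} (hi : poch Q Q (i + 1) ≠ 0) (hk : poch Q Q (k + 1) ≠ 0) :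
    qbinom Q (i + 1) (k + 1) = qbinom Q i (k + 1) + Q ^ (i + 1) * qbinom Q (i + 1) k := by
  rw [poch_succ] at hi hk
  simp only [qbinom, show i + 1 + (k + 1) = i + k + 1 + 1 by ring,
    show i + (k + 1) = i + k + 1 by ring, show i + 1 + k = i + k + 1 by ring, poch_succ]
  field_simp [mul_ne_zero_iff.mp hi, mul_ne_zero_iff.mp hk]
  ring

lemma qbinom_succ_mul {i k : ℕ} (hi : poch Q Q (i + 1) ≠ 0) (hk : poch Q Q (k + 1) ≠ 0) :
    qbinom Q (i + 1) k * (1 - Q ^ (i + 1)) = qbinom Q i (k + 1) * (1 - Q ^ (k + 1)) := by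
  rw [poch_succ] at hi hk
  simp only [qbinom, show i + (k + 1) = i + 1 + k by ring, poch_succ]
  field_simp [mul_ne_zero_iff.mp hi, mul_ne_zero_iff.mp hk]
  ring

end QBinomial

lemma Finset.Nat.sum_antidiagonal_telescope {M : Type*} [AddCommMonoid M] {n : ℕ}
    {g h : ℕ × ℕ → M} (hgh : ∀ i k, i + k + 1 = n → g (i, k + 1) = h (i + 1, k)) :
    ∑ p ∈ antidiagonal n, g p + h (0, n) = ∑ p ∈ antidiagonal n, h p + g (n, 0) := by
  cases n with
  | zero => simp [add_comm]
  | succ n =>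
    rw [Nat.sum_antidiagonal_succ', Nat.sum_antidiagonal_succ,
      sum_congr rfl fun p hp => hgh p.1 p.2 (by rw [mem_antidiagonal.mp hp])]
    abel

section QBinomialSums

variable {K : Type*} [Field K] {Q : K}

lemma sum_antidiagonal_succ_qbinom_mul {n : ℕ} (hQ : poch Q Q (n + 1) ≠ 0)
    (t : ℕ × ℕ → K) :
    ∑ p ∈ antidiagonal (n + 1), qbinom Q p.1 p.2 * t p =
      ∑ p ∈ antidiagonal n,
        qbinom Q p.1 p.2 * (t (p.1 + 1, p.2) + Q ^ p.1 * t (p.1, p.2 + 1)) := by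
  have hP : ∀ m ≤ n + 1, poch Q Q m ≠ 0 := fun m hm => poch_ne_zero_of_le hQ hm
  set g : ℕ × ℕ → K := fun p => qbinom Q p.1 p.2 * t (p.1 + 1, p.2)
  set h : ℕ × ℕ → K := fun p =>
    (qbinom Q p.1 (p.2 + 1) - Q ^ p.1 * qbinom Q p.1 p.2) * t (p.1, p.2 + 1)
  have htele := Nat.sum_antidiagonal_telescope (n := n) (g := g) (h := h) fun i k hik => by
    simp only [g, h, qbinom_succ_succ (hP (i + 1) (by omega)) (hP (k + 1) (by omega))]
    ring
  have h0 : h (0, n) = 0 := by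
    simp [h, qbinom_zero_left (hP n (by omega)), qbinom_zero_left (hP (n + 1) le_rfl)]
  have hshift : ∑ p ∈ antidiagonal n, qbinom Q p.1 (p.2 + 1) * t (p.1, p.2 + 1) =
      ∑ p ∈ antidiagonal n, qbinom Q p.1 p.2 * (Q ^ p.1 * t (p.1, p.2 + 1)) +
        ∑ p ∈ antidiagonal n, h p := by
    rw [← sum_add_distrib]
    exact sum_congr rfl fun p _ => by ring
  rw [Nat.sum_antidiagonal_succ', qbinom_zero_right hQ, one_mul, hshift]
  simp only [mul_add, sum_add_distrib]
  linear_combination h0 - htele - t (n + 1, 0) * qbinom_zero_right (hP n (by omega))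

theorem sum_qbinom_poch_succ {N : ℕ} (hQ : poch Q Q (N + 1) ≠ 0) (x : K) (b : ℕ → K) :
    ∑ p ∈ antidiagonal (N + 1), qbinom Q p.1 p.2 * poch x Q (p.1 + 1) * b p.2 =
      (1 - x * Q ^ (N + 1)) *
          ∑ p ∈ antidiagonal N, qbinom Q p.1 p.2 * poch x Q (p.1 + 1) * b p.2 +
        (1 - x) *
          ∑ p ∈ antidiagonal N, qbinom Q p.1 p.2 * Q ^ p.1 * poch x Q p.1 * b (p.2 + 1) := by
  have hP : ∀ m ≤ N + 1, poch Q Q m ≠ 0 := fun m hm => poch_ne_zero_of_le hQ hm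
  set g : ℕ × ℕ → K := fun p =>
    qbinom Q p.1 p.2 * (1 - Q ^ p.2) * Q ^ (p.1 + 1) * poch x Q (p.1 + 1) * b p.2
  set h : ℕ × ℕ → K := fun p =>
    qbinom Q p.1 p.2 * (1 - Q ^ p.1) * Q ^ p.1 * poch x Q p.1 * b (p.2 + 1)
  have htele := Nat.sum_antidiagonal_telescope (n := N) (g := g) (h := h) fun i k hik => by
    simp only [g, h, qbinom_succ_mul (hP (i + 1) (by omega)) (hP (k + 1) (by omega))]
  have hterm : ∀ p ∈ antidiagonal N,
      qbinom Q p.1 p.2 *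
          (poch x Q (p.1 + 1 + 1) * b p.2 + Q ^ p.1 * (poch x Q (p.1 + 1) * b (p.2 + 1))) =
        (1 - x * Q ^ (N + 1)) * (qbinom Q p.1 p.2 * (poch x Q (p.1 + 1) * b p.2)) +
          (1 - x) * (qbinom Q p.1 p.2 * (Q ^ p.1 * (poch x Q p.1 * b (p.2 + 1)))) -
            x * (g p - h p) := by
    rintro ⟨i, k⟩ hp
    rw [HasAntidiagonal.mem_antidiagonal] at hp
    subst hp
    simp only [g, h, poch_succ]
    ring
  simp only [mul_assoc]
  rw [sum_antidiagonal_succ_qbinom_mul hQ]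
  dsimp only
  rw [sum_congr rfl hterm, sum_sub_distrib, sum_add_distrib, ← mul_sum, ← mul_sum, ← mul_sum,
    sum_sub_distrib]
  -- the boundary terms `g (N, 0)` and `h (0, N)` carry the factor `1 - Q ^ 0 = 0`
  linear_combination -x * htele

end QBinomialSums

section ClosedForm

variable {K : Type*} [Field K]

noncomputable def oddClosedForm (z y q : K) (N : ℕ) : K :=
  ∑ p ∈ antidiagonal N, qbinom (q ^ 4) p.1 p.2 * poch (-(z * y * q)) (q ^ 4) (p.1 + 1) *
    (poch (-(z * y⁻¹ * q)) (q ^ 4) p.2 * (y * q) ^ (2 * p.2))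

lemma oddClosedForm_zero (z y q : K) : oddClosedForm z y q 0 = 1 + z * y * q := by
  simp [oddClosedForm, qbinom, poch_succ, poch_zero]

lemma oddClosedForm_inv_eq {z y q : K} (hy : y ≠ 0) (N : ℕ) :
    (q * y) ^ (2 * N + 2) * oddClosedForm z y⁻¹ q N =
      ∑ p ∈ antidiagonal N,
        qbinom (q ^ 4) p.1 p.2 * (q ^ 4) ^ p.1 * poch (-(z * y * q)) (q ^ 4) p.1 *
          (poch (-(z * y⁻¹ * q)) (q ^ 4) (p.2 + 1) * (y * q) ^ (2 * (p.2 + 1))) := by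
  rw [oddClosedForm, mul_sum, ← Nat.sum_antidiagonal_swap]
  refine sum_congr rfl fun ⟨i, k⟩ hp => ?_
  rw [HasAntidiagonal.mem_antidiagonal] at hp
  subst hp
  simp only [Prod.swap, qbinom_comm k i, inv_inv, mul_pow, inv_pow]
  field_simp
  ring

lemma oddClosedForm_succ {z y q : K} (hy : y ≠ 0) {N : ℕ}
    (hQ : poch (q ^ 4) (q ^ 4) (N + 1) ≠ 0) :
    oddClosedForm z y q (N + 1) =
      (1 + z * y * q ^ (4 * N + 5)) * oddClosedForm z y q N +
        (q * y) ^ (2 * N + 2) * (1 + z * y * q) * oddClosedForm z y⁻¹ q N := by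
  rw [mul_right_comm ((q * y) ^ (2 * N + 2)), oddClosedForm_inv_eq hy, oddClosedForm,
    oddClosedForm,
    sum_qbinom_poch_succ hQ _ fun k => poch (-(z * y⁻¹ * q)) (q ^ 4) k * (y * q) ^ (2 * k)]
  ring

lemma oddClosedForm_eq_sum_gauss (z y q : K) (N : ℕ) :
    oddClosedForm z y q N =
      ∑ j ∈ range (N + 1), gauss (q ^ 4) N j * poch (-(z * y * q)) (q ^ 4) (j + 1) *
        poch (-(z * y⁻¹ * q)) (q ^ 4) (N - j) * (y * q) ^ (2 * N - 2 * j) := by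
  rw [oddClosedForm, Nat.sum_antidiagonal_eq_sum_range_succ (fun i k => qbinom (q ^ 4) i k *
    poch (-(z * y * q)) (q ^ 4) (i + 1) * (poch (-(z * y⁻¹ * q)) (q ^ 4) k * (y * q) ^ (2 * k)))]
  refine sum_congr rfl fun j hj => ?_
  have hjN : j ≤ N := Nat.lt_succ_iff.mp (mem_range.mp hj)
  rw [gauss, qbinom, Nat.add_sub_cancel' hjN, Nat.mul_sub_left_distrib]
  ring

lemma oddGF_two_mul_add_one {z y q : K} (hy : y ≠ 0) {N : ℕ}
    (hQ : poch (q ^ 4) (q ^ 4) N ≠ 0) :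
    oddGF z y q (2 * N + 1) = oddClosedForm z y q N := by
  induction N generalizing y with
  | zero =>
    rw [show 2 * 0 + 1 = 0 + 1 from rfl, oddGF_succ z q hy, zero_add, if_pos odd_one, oddGF_zero,
      oddGF_zero, oddClosedForm_zero]
    ring
  | succ N ih =>
    have hQN := poch_ne_zero_of_le hQ N.le_succ
    rw [show 2 * (N + 1) + 1 = 2 * N + 3 by ring, oddGF_two_mul_add_three z q hy, ih hy hQN,
      ih (inv_ne_zero hy) hQN, oddClosedForm_succ hy hQ]

end ClosedForm

theorem strict_andrews_odd_general {K : Type*} [Field K] (q z y : K) (N : ℕ)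
    (hy : y ≠ 0) (h : ∀ j, 1 ≤ j → j ≤ N → (1 : K) - q ^ (4 * j) ≠ 0) :
    (∑ᶠ μ : {μ : IntPartition // μ.Strict ∧ μ.parts 0 ≤ 2 * N + 1},
        z ^ μ.1.oddParts * y ^ μ.1.conjOddParts * q ^ μ.1.size) =
      ∑ j ∈ Finset.range (N + 1),
        gauss (q ^ 4) N j * poch (-(z * y * q)) (q ^ 4) (j + 1) *
          poch (-(z * y⁻¹ * q)) (q ^ 4) (N - j) * (y * q) ^ (2 * N - 2 * j) := by
  have hQ : poch (q ^ 4) (q ^ 4) N ≠ 0 := prod_ne_zero_iff.mpr fun k hk => by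
    rw [← pow_succ', ← pow_mul]
    exact h (k + 1) (by omega) (mem_range.mp hk)
  rw [← oddClosedForm_eq_sum_gauss, ← oddGF_two_mul_add_one hy hQ]
  exact finsum_set_coe_eq_finsum_mem (IntPartition.strictBounded (2 * N + 1))
    (f := fun μ => z ^ μ.oddParts * y ^ μ.conjOddParts * q ^ μ.size)

theorem strict_andrews_odd {K : Type*} [Field K] (q z y : K) (N : ℕ)
    (hz : z ≠ 0) (hy : y ≠ 0) (h : ∀ j, 1 ≤ j → j ≤ N → (1 : K) - q ^ (4 * j) ≠ 0) :
    (∑ᶠ μ : {μ : IntPartition // μ.Strict ∧ μ.parts 0 ≤ 2 * N + 1},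
        z ^ μ.1.oddParts * y ^ μ.1.conjOddParts * q ^ μ.1.size) =
      ∑ j ∈ Finset.range (N + 1),
        gauss (q ^ 4) N j * poch (-(z * y * q)) (q ^ 4) (j + 1) *
          poch (-(z * y⁻¹ * q)) (q ^ 4) (N - j) * (y * q) ^ (2 * N - 2 * j) :=
  strict_andrews_odd_general q z y N hy h
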